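/- arXiv:2207.05323 — 2 statements merged into one kernel-verified Lean document; each statement's English description precedes it below -/
import Mathlib

section
/- Let M be an n×n integer matrix with nonzero determinant and Smith normal form M = U D V with U, V unimodular integer matrices and D = diag(d_1,...,d_n). For a binomial system x^{m_i} = c_i (rows m_i of M, c_i real nonzero), the number of real solutions in (R\{0})^n equals 2^k, where k is the number of even diagonal entries d_i for which the corresponding transformed constant is positive, provided every even d_i with negative transformed constant forces zero solutions; in particular, the number of real torus solutions is either 0 or a power of 2. -/
/-!
The map `x ↦ (∏ⱼ xⱼ ^ Mᵢⱼ)ᵢ` is an endomorphism of the group `(ℝˣ)ⁿ`, so a nonempty solution set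
is a coset of its kernel. Applying `log |·|` to a kernel element gives a real vector killed by `M`,
hence zero since `det M ≠ 0`: the kernel consists of sign vectors. It is therefore a finite group
in which every element squares to `1`, and by Cauchy's theorem its order is a power of `2`.
-/

open Finset

theorem exists_card_eq_two_pow_of_sq_eq_one {G : Type*} [Group G] [Finite G]
    (h : ∀ g : G, g ^ 2 = 1) : ∃ k, Nat.card G = 2 ^ k :=
  IsPGroup.iff_card.mp fun g => ⟨1, by simpa using h g⟩

theorem MonoidHom.card_preimage_singleton_eq_zero_or {H K : Type*} [Group H] [Group K]
    (f : H →* K) (k : K) : Nat.card (f ⁻¹' {k}) = 0 ∨ Nat.card (f ⁻¹' {k}) = Nat.card f.ker := by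
  obtain ⟨a, rfl⟩ | hk := em (k ∈ Set.range f)
  · exact Or.inr (Nat.card_congr (f.fiberEquivKer a))
  · left
    rw [Nat.card_eq_zero, isEmpty_subtype]
    exact Or.inl fun x hx => hk ⟨x, hx⟩

namespace Matrix

variable {m n : Type*} [Fintype n]

def monomialMap {G : Type*} [CommGroup G] (M : Matrix m n ℤ) : (n → G) →* (m → G) where
  toFun x i := ∏ j, x j ^ M i j
  map_one' := by ext; simp
  map_mul' x y := by ext; simp [mul_zpow, prod_mul_distrib]

theorem monomialMap_apply {G : Type*} [CommGroup G] (M : Matrix m n ℤ) (x : n → G) (i : m) :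
    M.monomialMap x i = ∏ j, x j ^ M i j := rfl

theorem setOf_monomial_eq_image_monomialMap {K : Type*} [CommGroupWithZero K]
    (M : Matrix m n ℤ) (c : m → Kˣ) :
    {x : n → K | (∀ j, x j ≠ 0) ∧ ∀ i, ∏ j, x j ^ M i j = c i} =
      (fun u j => (u j : K)) '' (M.monomialMap ⁻¹' {c}) := by
  ext x
  constructor
  · rintro ⟨hx, hxc⟩
    refine ⟨fun j => Units.mk0 (x j) (hx j), funext fun i => Units.ext ?_, rfl⟩
    simp [monomialMap_apply, hxc]
  · rintro ⟨u, hu, rfl⟩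
    refine ⟨fun j => (u j).ne_zero, fun i => ?_⟩
    rw [Set.mem_preimage, Set.mem_singleton_iff] at hu
    simp [← hu, monomialMap_apply]

theorem abs_eq_one_of_mem_ker_monomialMap [DecidableEq n] {M : Matrix n n ℤ} (hM : M.det ≠ 0)
    {y : n → ℝˣ} (hy : y ∈ (M.monomialMap (G := ℝˣ)).ker) (j : n) :
    |(y j : ℝ)| = 1 := by
  have hlog : (M.map (Int.cast : ℤ → ℝ)) *ᵥ (fun j => Real.log |(y j : ℝ)|) = 0 := by
    ext i
    have hyi : ∏ j, (y j : ℝ) ^ M i j = 1 := by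
      simpa [monomialMap_apply] using congr_arg (fun z : n → ℝˣ => (z i : ℝ)) hy
    calc ((M.map (Int.cast : ℤ → ℝ)) *ᵥ (fun j => Real.log |(y j : ℝ)|)) i
        = Real.log |∏ j, (y j : ℝ) ^ M i j| := by
          simp only [abs_prod, abs_zpow]
          rw [Real.log_prod fun j _ => zpow_ne_zero _ (by simp)]
          simp [mulVec, dotProduct, Real.log_zpow]
      _ = 0 := by simp [hyi]
  have hdet : (M.map (Int.cast : ℤ → ℝ)).det ≠ 0 := by
    rwa [← Int.cast_det, Int.cast_ne_zero]
  exact Real.eq_one_of_pos_of_log_eq_zero (by simp)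
    (congr_fun (eq_zero_of_mulVec_eq_zero hdet hlog) j)

theorem eq_one_or_eq_neg_one_of_mem_ker_monomialMap [DecidableEq n] {M : Matrix n n ℤ}
    (hM : M.det ≠ 0) {y : n → ℝˣ} (hy : y ∈ (M.monomialMap (G := ℝˣ)).ker)
    (j : n) : y j = 1 ∨ y j = -1 := by
  rcases (abs_eq zero_le_one).mp (abs_eq_one_of_mem_ker_monomialMap hM hy j) with h | h
  · exact Or.inl (Units.ext h)
  · exact Or.inr (Units.ext (by simpa using h))

theorem exists_card_ker_monomialMap_eq_two_pow [DecidableEq n] {M : Matrix n n ℤ}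
    (hM : M.det ≠ 0) :
    ∃ k, Nat.card (M.monomialMap (G := ℝˣ)).ker = 2 ^ k := by
  have hpm : ∀ y ∈ (M.monomialMap (G := ℝˣ)).ker, ∀ j, y j = 1 ∨ y j = -1 :=
    fun _ hy => eq_one_or_eq_neg_one_of_mem_ker_monomialMap hM hy
  have : Finite (M.monomialMap (G := ℝˣ)).ker :=
    ((Set.Finite.pi fun _ => Set.toFinite {1, -1}).subset
      fun y hy => Set.mem_univ_pi.mpr (hpm y hy)).to_subtype
  refine exists_card_eq_two_pow_of_sq_eq_one fun y => Subtype.ext (funext fun j => ?_)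
  rcases hpm y y.2 j with h | h <;> simp [h]

end Matrix

theorem real_binomial_system_card_zero_or_pow_two_general {n : ℕ}
    (M : Matrix (Fin n) (Fin n) ℤ)
    (hM : M.det ≠ 0)
    (c : Fin n → ℝ) (hc : ∀ i, c i ≠ 0) :
    {x : Fin n → ℝ | (∀ i, x i ≠ 0) ∧ ∀ i, (∏ j, x j ^ (M i j)) = c i}.ncard = 0 ∨
      ∃ k : ℕ,
        {x : Fin n → ℝ | (∀ i, x i ≠ 0) ∧ ∀ i, (∏ j, x j ^ (M i j)) = c i}.ncard =
          2 ^ k := by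
  lift c to Fin n → ℝˣ using fun i => (hc i).isUnit
  have hval : Function.Injective fun (u : Fin n → ℝˣ) j => (u j : ℝ) :=
    fun u v h => funext fun j => Units.ext (congr_fun h j)
  rw [Matrix.setOf_monomial_eq_image_monomialMap, Set.ncard_image_of_injective _ hval,
    ← Nat.card_coe_set_eq]
  obtain ⟨k, hk⟩ := M.exists_card_ker_monomialMap_eq_two_pow hM
  exact (MonoidHom.card_preimage_singleton_eq_zero_or _ c).imp id fun h => ⟨k, h.trans hk⟩

/-- Let `M` be an `n × n` integer matrix of nonzero determinant, with Smith
normal form `M = U D V` where `U, V` are unimodular and `D` is diagonal. Then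
the number of solutions in `(ℝ \ {0})^n` of the binomial system
`x^{m_i} = c_i` (with rows `m_i` of `M` and nonzero real constants `c_i`) is
either `0` or a power of `2`. -/
theorem real_binomial_system_card_zero_or_pow_two {n : ℕ}
    (M U V : Matrix (Fin n) (Fin n) ℤ) (d : Fin n → ℤ)
    (hM : M.det ≠ 0)
    (hU : U.det = 1 ∨ U.det = -1) (hV : V.det = 1 ∨ V.det = -1)
    (hSNF : M = U * Matrix.diagonal d * V)
    (c : Fin n → ℝ) (hc : ∀ i, c i ≠ 0) :
    {x : Fin n → ℝ | (∀ i, x i ≠ 0) ∧ ∀ i, (∏ j, x j ^ (M i j)) = c i}.ncard = 0 ∨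
      ∃ k : ℕ,
        {x : Fin n → ℝ | (∀ i, x i ≠ 0) ∧ ∀ i, (∏ j, x j ^ (M i j)) = c i}.ncard =
          2 ^ k :=
  real_binomial_system_card_zero_or_pow_two_general M hM c hc
end

section
/- The system F = ⟨f_1, f_2⟩ with f_1 = -1 - 24000y + x^3 and f_2 = -9 + 50xy - y^2 has exactly 4 solutions in (R\{0})^2. -/
/-!
Solving `f₁ = 0` for `y = (x³ - 1) / 24000` turns `f₂` into `g(x) / 24000²` for the sextic
`g = eliminant`, and `f₂` already excludes the coordinate axes (`f₂(0, y) = -9 - y²`,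
`f₂(x, 0) = -9`). So the solutions correspond to the real zeros of `g`. Since
`g'(x) ≈ -6x³(x² - 800000)`, `g` is strictly increasing, decreasing, increasing, decreasing on
`(-∞, -1000]`, `[-894, -8]`, `[8, 894]`, `[1000, ∞)`, it is positive, negative, positive on the
gaps between these pieces and tends to `-∞` at both ends: it has exactly one zero on each piece.
-/

open Set

lemma Set.ncard_eq_four_of_lt {α : Type*} [LinearOrder α] {a b c d : α}
    (hab : a < b) (hbc : b < c) (hcd : c < d) : ({a, b, c, d} : Set α).ncard = 4 := by
  rw [ncard_insert_of_notMem
      (by simp [hab.ne, (hab.trans hbc).ne, (hab.trans (hbc.trans hcd)).ne]),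
    ncard_insert_of_notMem (by simp [hbc.ne, (hbc.trans hcd).ne]),
    ncard_insert_of_notMem (by simp [hcd.ne]), ncard_singleton]

namespace RunningExample

def eliminant (x : ℝ) : ℝ :=
  -x ^ 6 + 1200000 * x ^ 4 + 2 * x ^ 3 - 1200000 * x - 5184000001

def eliminantDeriv (x : ℝ) : ℝ :=
  -6 * x ^ 5 + 4800000 * x ^ 3 + 6 * x ^ 2 - 1200000

lemma eliminant_eq_mul_f₂ (x : ℝ) :
    eliminant x = 24000 ^ 2 *
      (-9 + 50 * x * ((x ^ 3 - 1) / 24000) - ((x ^ 3 - 1) / 24000) ^ 2) := by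
  unfold eliminant; ring

lemma ne_zero_of_f₂_eq_zero {x y : ℝ} (h : -9 + 50 * x * y - y ^ 2 = 0) : x ≠ 0 ∧ y ≠ 0 := by
  refine ⟨?_, ?_⟩ <;> rintro rfl
  · nlinarith [sq_nonneg y]
  · linarith

lemma solutionSet_eq_image :
    {p : ℝ × ℝ | p.1 ≠ 0 ∧ p.2 ≠ 0 ∧
      -1 - 24000 * p.2 + p.1 ^ 3 = 0 ∧ -9 + 50 * p.1 * p.2 - p.2 ^ 2 = 0} =
      (fun x : ℝ => (x, (x ^ 3 - 1) / 24000)) '' {x | eliminant x = 0} := by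
  ext ⟨x, y⟩
  simp only [mem_ofPred_eq, mem_image, Prod.mk.injEq]
  constructor
  · rintro ⟨-, -, hf₁, hf₂⟩
    have hy : (x ^ 3 - 1) / 24000 = y := by linarith
    exact ⟨x, by rw [eliminant_eq_mul_f₂, hy, hf₂, mul_zero], rfl, hy⟩
  · rintro ⟨x, hx, rfl, rfl⟩
    have hf₂ : -9 + 50 * x * ((x ^ 3 - 1) / 24000) - ((x ^ 3 - 1) / 24000) ^ 2 = 0 := by
      rw [eliminant_eq_mul_f₂] at hx; simpa using hx
    exact ⟨(ne_zero_of_f₂_eq_zero hf₂).1, (ne_zero_of_f₂_eq_zero hf₂).2, by ring, hf₂⟩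

lemma continuous_eliminant : Continuous eliminant := by
  unfold eliminant; fun_prop

lemma hasDerivAt_eliminant (x : ℝ) : HasDerivAt eliminant (eliminantDeriv x) x := by
  have h := ((((hasDerivAt_pow 6 x).neg.add ((hasDerivAt_pow 4 x).const_mul 1200000)).add
    ((hasDerivAt_pow 3 x).const_mul 2)).sub ((hasDerivAt_id x).const_mul 1200000)).sub_const
    5184000001
  exact h.congr_deriv (by unfold eliminantDeriv; ring)

lemma eliminantDeriv_pos_of_le {x : ℝ} (hx : x ≤ -1000) : 0 < eliminantDeriv x := by
  unfold eliminantDeriv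
  nlinarith [sq_nonneg (x ^ 2 - 1000000),
    mul_nonneg (pow_two_nonneg (x ^ 2)) (sq_nonneg (x + 1000))]

lemma eliminantDeriv_neg_of_mem_Icc {x : ℝ} (hx : x ∈ Icc (-894) (-8)) :
    eliminantDeriv x < 0 := by
  obtain ⟨h₁, h₂⟩ := hx
  have hI : 0 ≤ (x + 894) * (-8 - x) := mul_nonneg (by linarith) (by linarith)
  unfold eliminantDeriv
  nlinarith [mul_nonneg hI (sq_nonneg x)]

lemma eliminantDeriv_pos_of_mem_Icc {x : ℝ} (hx : x ∈ Icc 8 894) : 0 < eliminantDeriv x := by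
  obtain ⟨h₁, h₂⟩ := hx
  have hI : 0 ≤ (x - 8) * (894 - x) := mul_nonneg (by linarith) (by linarith)
  unfold eliminantDeriv
  nlinarith [mul_nonneg hI (sq_nonneg x)]

lemma eliminantDeriv_neg_of_ge {x : ℝ} (hx : 1000 ≤ x) : eliminantDeriv x < 0 := by
  unfold eliminantDeriv
  nlinarith [sq_nonneg (x - 1000),
    mul_nonneg (pow_two_nonneg (x ^ 2)) (sq_nonneg (x - 1000))]

lemma eliminant_pos_of_mem_Icc_left {x : ℝ} (hx : x ∈ Icc (-1000) (-894)) : 0 < eliminant x := by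
  obtain ⟨h₁, h₂⟩ := hx
  have hI : 0 ≤ (x + 1000) * (-894 - x) := mul_nonneg (by linarith) (by linarith)
  unfold eliminant
  nlinarith [mul_nonneg hI (sq_nonneg x), mul_nonneg (mul_nonneg hI (sq_nonneg x)) (sq_nonneg x)]

lemma eliminant_neg_of_mem_Icc {x : ℝ} (hx : x ∈ Icc (-8) 8) : eliminant x < 0 := by
  obtain ⟨h₁, h₂⟩ := hx
  have hI : 0 ≤ (x + 8) * (8 - x) := mul_nonneg (by linarith) (by linarith)
  unfold eliminant
  nlinarith [mul_nonneg hI (sq_nonneg x), mul_nonneg (mul_nonneg hI (sq_nonneg x)) (sq_nonneg x)]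

lemma eliminant_pos_of_mem_Icc_right {x : ℝ} (hx : x ∈ Icc 894 1000) : 0 < eliminant x := by
  obtain ⟨h₁, h₂⟩ := hx
  have hI : 0 ≤ (x - 894) * (1000 - x) := mul_nonneg (by linarith) (by linarith)
  unfold eliminant
  nlinarith [mul_nonneg hI (sq_nonneg x), mul_nonneg (mul_nonneg hI (sq_nonneg x)) (sq_nonneg x)]

lemma strictMonoOn_eliminant_Iic : StrictMonoOn eliminant (Iic (-1000)) :=
  strictMonoOn_of_hasDerivWithinAt_pos (convex_Iic _) continuous_eliminant.continuousOn
    (fun x _ => (hasDerivAt_eliminant x).hasDerivWithinAt)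
    (fun x hx => eliminantDeriv_pos_of_le (interior_subset hx : x ∈ Iic (-1000)))

lemma strictAntiOn_eliminant_Icc : StrictAntiOn eliminant (Icc (-894) (-8)) :=
  strictAntiOn_of_hasDerivWithinAt_neg (convex_Icc _ _) continuous_eliminant.continuousOn
    (fun x _ => (hasDerivAt_eliminant x).hasDerivWithinAt)
    (fun _ hx => eliminantDeriv_neg_of_mem_Icc (interior_subset hx))

lemma strictMonoOn_eliminant_Icc : StrictMonoOn eliminant (Icc 8 894) :=
  strictMonoOn_of_hasDerivWithinAt_pos (convex_Icc _ _) continuous_eliminant.continuousOn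
    (fun x _ => (hasDerivAt_eliminant x).hasDerivWithinAt)
    (fun _ hx => eliminantDeriv_pos_of_mem_Icc (interior_subset hx))

lemma strictAntiOn_eliminant_Ici : StrictAntiOn eliminant (Ici 1000) :=
  strictAntiOn_of_hasDerivWithinAt_neg (convex_Ici _) continuous_eliminant.continuousOn
    (fun x _ => (hasDerivAt_eliminant x).hasDerivWithinAt)
    (fun x hx => eliminantDeriv_neg_of_ge (interior_subset hx : x ∈ Ici 1000))

lemma mem_pieces_of_eliminant_eq_zero {x : ℝ} (hx : eliminant x = 0) :
    x ∈ Iic (-1000) ∨ x ∈ Icc (-894) (-8) ∨ x ∈ Icc 8 894 ∨ x ∈ Ici 1000 := by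
  rcases le_or_gt x (-1000) with h₁ | h₁
  · exact Or.inl h₁
  rcases le_or_gt x (-894) with h₂ | h₂
  · exact absurd hx (eliminant_pos_of_mem_Icc_left ⟨h₁.le, h₂⟩).ne'
  rcases le_or_gt x (-8) with h₃ | h₃
  · exact Or.inr (Or.inl ⟨h₂.le, h₃⟩)
  rcases le_or_gt x 8 with h₄ | h₄
  · exact absurd hx (eliminant_neg_of_mem_Icc ⟨h₃.le, h₄⟩).ne
  rcases le_or_gt x 894 with h₅ | h₅
  · exact Or.inr (Or.inr (Or.inl ⟨h₄.le, h₅⟩))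
  rcases le_or_gt x 1000 with h₆ | h₆
  · exact absurd hx (eliminant_pos_of_mem_Icc_right ⟨h₅.le, h₆⟩).ne'
  · exact Or.inr (Or.inr (Or.inr h₆.le))

lemma exists_zeros_eliminant : ∃ x₁ x₂ x₃ x₄ : ℝ, x₁ < x₂ ∧ x₂ < x₃ ∧ x₃ < x₄ ∧
    {x | eliminant x = 0} = {x₁, x₂, x₃, x₄} := by
  have hc {a b : ℝ} : ContinuousOn eliminant (Icc a b) := continuous_eliminant.continuousOn
  obtain ⟨x₁, hx₁, h₁⟩ := intermediate_value_Icc (by norm_num : (-1100 : ℝ) ≤ -1000) hc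
    ⟨by norm_num [eliminant], (eliminant_pos_of_mem_Icc_left (by norm_num)).le⟩
  obtain ⟨x₂, hx₂, h₂⟩ := intermediate_value_Icc' (by norm_num : (-894 : ℝ) ≤ -8) hc
    ⟨(eliminant_neg_of_mem_Icc (by norm_num)).le, (eliminant_pos_of_mem_Icc_left (by norm_num)).le⟩
  obtain ⟨x₃, hx₃, h₃⟩ := intermediate_value_Icc (by norm_num : (8 : ℝ) ≤ 894) hc
    ⟨(eliminant_neg_of_mem_Icc (by norm_num)).le, (eliminant_pos_of_mem_Icc_right (by norm_num)).le⟩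
  obtain ⟨x₄, hx₄, h₄⟩ := intermediate_value_Icc' (by norm_num : (1000 : ℝ) ≤ 1100) hc
    ⟨by norm_num [eliminant], (eliminant_pos_of_mem_Icc_right (by norm_num)).le⟩
  refine ⟨x₁, x₂, x₃, x₄, by linarith [hx₁.2, hx₂.1], by linarith [hx₂.2, hx₃.1],
    by linarith [hx₃.2, hx₄.1], ?_⟩
  ext x
  simp only [mem_ofPred_eq, mem_insert_iff, mem_singleton_iff]
  refine ⟨fun hx => ?_, by rintro (rfl | rfl | rfl | rfl) <;> assumption⟩
  rcases mem_pieces_of_eliminant_eq_zero hx with h | h | h | h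
  · exact Or.inl (strictMonoOn_eliminant_Iic.injOn h hx₁.2 (hx.trans h₁.symm))
  · exact Or.inr (Or.inl (strictAntiOn_eliminant_Icc.injOn h hx₂ (hx.trans h₂.symm)))
  · exact Or.inr (Or.inr (Or.inl (strictMonoOn_eliminant_Icc.injOn h hx₃ (hx.trans h₃.symm))))
  · exact Or.inr (Or.inr (Or.inr (strictAntiOn_eliminant_Ici.injOn h hx₄.1 (hx.trans h₄.symm))))

end RunningExample

/-- The system `f₁ = -1 - 24000 y + x³`, `f₂ = -9 + 50 x y - y²` has exactly
4 solutions in the real torus `(ℝ \ {0})²`. -/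
theorem running_example_four_real_torus_solutions :
    {p : ℝ × ℝ | p.1 ≠ 0 ∧ p.2 ≠ 0 ∧
      -1 - 24000 * p.2 + p.1 ^ 3 = 0 ∧
      -9 + 50 * p.1 * p.2 - p.2 ^ 2 = 0}.ncard = 4 := by
  obtain ⟨x₁, x₂, x₃, x₄, h₁₂, h₂₃, h₃₄, hzeros⟩ := RunningExample.exists_zeros_eliminant
  rw [RunningExample.solutionSet_eq_image,
    ncard_image_of_injective _ fun _ _ h => congrArg Prod.fst h,
    hzeros, Set.ncard_eq_four_of_lt h₁₂ h₂₃ h₃₄]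
end
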